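/- Let X be a finite alphabet, let P be a probability distribution on X with P(a) > 0 for all a ∈ X, and let ρ > 0. For x ∈ X^n let Ĥ_x be the empirical entropy of x and P^n(x) = ∏_{i=1}^n P(x_i). Then lim_{n→∞} (1/n) log₂ ∑_{x∈X^n} P^n(x) · 2^{nρĤ_x} = max_Q [ρ H(Q) − D(Q‖P)], where the maximum is over all probability distributions Q on X, H(Q) = −∑_a Q(a) log₂ Q(a) is the Shannon entropy, and D(Q‖P) = ∑_a Q(a) log₂(Q(a)/P(a)) is the Kullback–Leibler divergence. -/

import Mathlib

open Finset

variable {X : Type*} [Fintype X] [DecidableEq X]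

/-- Number of occurrences of the symbol `a` in the string `x ∈ X^n`. -/
def occ {n : ℕ} (x : Fin n → X) (a : X) : ℕ :=
  (Finset.univ.filter fun i => x i = a).card

/-- Empirical entropy (base 2) of the string `x ∈ X^n`, with `0 log 0 = 0`. -/
noncomputable def empEnt {n : ℕ} (x : Fin n → X) : ℝ :=
  -∑ a : X, ((occ x a : ℝ) / n) * Real.logb 2 ((occ x a : ℝ) / n)

open Real Filter

set_option linter.unusedSectionVars false
set_option linter.unusedVariables false
set_option maxHeartbeats 2000000

lemma sum_occ {n : ℕ} (x : Fin n → X) : ∑ a, occ x a = n := by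
  have h := Finset.card_eq_sum_card_fiberwise
    (fun i (_ : i ∈ (Finset.univ : Finset (Fin n))) => Finset.mem_univ (x i))
  simpa [occ, Finset.card_univ] using h.symm

lemma occ_eq_zero_of_not_mem_image {n : ℕ} {x : Fin n → X} {b : X}
    (hb : b ∉ Finset.univ.image x) : occ x b = 0 := by
  rw [occ, Finset.card_eq_zero, Finset.filter_eq_empty_iff]
  intro i _
  exact fun h => hb (h ▸ Finset.mem_image_of_mem x (Finset.mem_univ i))

lemma prod_pow_occ {n : ℕ} (x : Fin n → X) (g : X → ℝ) :
    ∏ i, g (x i) = ∏ a, g a ^ occ x a :=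
  calc ∏ i, g (x i) = ∏ b ∈ Finset.univ.image x, g b ^ occ x b := Finset.prod_comp g x
    _ = ∏ a, g a ^ occ x a := Finset.prod_subset (Finset.subset_univ _)
        (fun b _ hb => by rw [occ_eq_zero_of_not_mem_image hb, pow_zero])

lemma occ_cons {n : ℕ} (a : X) (y : Fin n → X) (b : X) :
    occ (Fin.cons a y) b = (if a = b then 1 else 0) + occ y b := by
  simp only [occ, Finset.card_filter]
  rw [Fin.sum_univ_succ]
  simp [Fin.cons_zero, Fin.cons_succ]

noncomputable def typeCard (n : ℕ) (X : Type*) [Fintype X] [DecidableEq X] (k : X → ℕ) : ℕ :=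
  (Finset.univ.filter fun x : Fin n → X => occ x = k).card

lemma typeCard_mul_factorial (n : ℕ) (k : X → ℕ) (hk : ∑ a, k a = n) :
    typeCard n X k * ∏ a, (k a).factorial = n.factorial := by
  induction n generalizing k with
  | zero =>
    have hk0 : k = fun _ => 0 := by
      funext a
      exact (Finset.sum_eq_zero_iff.mp hk) a (Finset.mem_univ a)
    subst hk0
    have h1 : (Finset.univ.filter fun x : Fin 0 → X => occ x = fun _ => 0) = Finset.univ := by
      refine Finset.filter_true_of_mem fun x _ => ?_
      funext a
      simp [occ]
    rw [typeCard, h1]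
    simp [Finset.card_univ]
  | succ n ih =>
    -- split by the first coordinate
    -- per-fiber evaluation
    have hfiber : ∀ a : X,
        ((Finset.univ.filter fun x : Fin (n+1) → X => occ x = k ∧ x 0 = a)).card
          * ∏ b, (k b).factorial = k a * n.factorial := by
      intro a
      by_cases hka : k a = 0
      · have : (Finset.univ.filter fun x : Fin (n+1) → X => occ x = k ∧ x 0 = a) = ∅ := by
          rw [Finset.filter_eq_empty_iff]
          rintro x - ⟨hocc, hx0⟩
          have h1 : 0 < occ x a := by
            rw [occ, Finset.card_pos]
            exact ⟨0, Finset.mem_filter.mpr ⟨Finset.mem_univ _, hx0⟩⟩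
          rw [hocc] at h1; omega
        rw [this]; simp [hka]
      · -- k a ≥ 1
        set k' : X → ℕ := Function.update k a (k a - 1) with hk'def
        have hk'a : k' a = k a - 1 := Function.update_self a _ k
        have hk'b : ∀ b, b ≠ a → k' b = k b := fun b hb => Function.update_of_ne hb _ k
        have hcard : ((Finset.univ.filter fun x : Fin (n+1) → X => occ x = k ∧ x 0 = a)).card
            = typeCard n X k' := by
          rw [typeCard]
          apply Finset.card_nbij' (i := fun x => Fin.tail x) (j := fun y => Fin.cons a y)
          · rintro x hx
            replace hx := Finset.mem_filter.mp hx
            show _ ∈ Finset.univ.filter _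
            simp only [Finset.mem_filter, Finset.mem_univ, true_and] at hx ⊢
            obtain ⟨hocc, hx0⟩ := hx
            funext b
            have hx' : x = Fin.cons a (Fin.tail x) := by
              rw [← hx0]; exact (Fin.cons_self_tail x).symm
            have := occ_cons a (Fin.tail x) b
            rw [← hx', hocc] at this
            by_cases hb : b = a
            · subst hb; simp at this; rw [hk'a]; omega
            · rw [hk'b b hb]; simpa [Ne.symm hb] using this.symm
          · rintro y hy
            replace hy := Finset.mem_filter.mp hy
            show _ ∈ Finset.univ.filter _
            simp only [Finset.mem_filter, Finset.mem_univ, true_and] at hy ⊢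
            refine ⟨?_, by simp⟩
            funext b
            rw [occ_cons a y b, hy]
            by_cases hb : b = a
            · subst hb; simp [hk'a]; omega
            · simp [Ne.symm hb, hk'b b hb]
          · intro x hx
            replace hx := Finset.mem_filter.mp hx
            simp only [Finset.mem_filter, Finset.mem_univ, true_and] at hx
            rw [← hx.2]; exact Fin.cons_self_tail x
          · intro y hy
            simp
        have hsum' : ∑ b, k' b = n := by
          have h1 : ∑ b, k b = k a + ∑ b ∈ Finset.univ.erase a, k b :=
            (Finset.add_sum_erase _ k (Finset.mem_univ a)).symm
          have h2 : ∑ b, k' b = k' a + ∑ b ∈ Finset.univ.erase a, k' b :=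
            (Finset.add_sum_erase _ k' (Finset.mem_univ a)).symm
          have h3 : ∑ b ∈ Finset.univ.erase a, k' b = ∑ b ∈ Finset.univ.erase a, k b :=
            Finset.sum_congr rfl fun b hb => hk'b b (Finset.ne_of_mem_erase hb)
          rw [h2, h3, hk'a]
          rw [h1] at hk
          clear hcard h2 h3
          omega
        have hprodf : ∏ b, (k b).factorial = k a * ∏ b, (k' b).factorial := by
          rw [← Finset.mul_prod_erase _ _ (Finset.mem_univ a),
              ← Finset.mul_prod_erase _ (fun b => (k' b).factorial) (Finset.mem_univ a)]
          have h3 : ∏ b ∈ Finset.univ.erase a, (k' b).factorial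
              = ∏ b ∈ Finset.univ.erase a, (k b).factorial :=
            Finset.prod_congr rfl fun b hb => by rw [hk'b b (Finset.ne_of_mem_erase hb)]
          rw [h3, hk'a, ← mul_assoc]
          congr 1
          obtain ⟨m, hm⟩ := Nat.exists_eq_succ_of_ne_zero hka
          rw [hm]
          simp [Nat.factorial_succ]
        rw [hcard, hprodf, ← mul_assoc, mul_comm (typeCard n X k') (k a), mul_assoc,
          ih k' hsum']
    have hsplit : typeCard (n+1) X k = ∑ a : X,
        ((Finset.univ.filter fun x : Fin (n+1) → X => occ x = k ∧ x 0 = a)).card := by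
      rw [typeCard]
      rw [Finset.card_eq_sum_card_fiberwise
        (f := fun x : Fin (n+1) → X => x 0) (t := Finset.univ) (fun x _ => Finset.mem_univ _)]
      congr 1
      funext a
      rw [Finset.filter_filter]
    calc typeCard (n+1) X k * ∏ a, (k a).factorial
        = ∑ a : X, ((Finset.univ.filter fun x : Fin (n+1) → X => occ x = k ∧ x 0 = a)).card
            * ∏ b, (k b).factorial := by rw [hsplit, Finset.sum_mul]
      _ = ∑ a : X, k a * n.factorial := Finset.sum_congr rfl fun a _ => hfiber a
      _ = (n+1).factorial := by rw [← Finset.sum_mul, hk, Nat.factorial_succ]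

lemma pow_le_exp_mul_factorial (n : ℕ) : (n:ℝ)^n ≤ Real.exp n * n.factorial := by
  have h1 : ((n:ℝ))^n / n.factorial ≤ Real.exp n := by
    calc ((n:ℝ))^n / n.factorial ≤ ∑ i ∈ Finset.range (n+1), (n:ℝ)^i / i.factorial := by
          refine Finset.single_le_sum (f := fun i => (n:ℝ)^i / i.factorial) ?_ (Finset.self_mem_range_succ n)
          intro i _
          positivity
      _ ≤ Real.exp n := Real.sum_le_exp_of_nonneg (Nat.cast_nonneg n) (n+1)
  have hf : (0:ℝ) < n.factorial := by exact_mod_cast Nat.factorial_pos n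
  calc (n:ℝ)^n = ((n:ℝ)^n / n.factorial) * n.factorial := by field_simp
    _ ≤ Real.exp n * n.factorial := mul_le_mul_of_nonneg_right h1 hf.le

lemma factorial_mul_exp_le (k : ℕ) (hk : 1 ≤ k) :
    (k.factorial : ℝ) * Real.exp k ≤ Real.exp 1 * (k:ℝ)^k * k := by
  induction k with
  | zero => omega
  | succ m ih =>
    rcases Nat.lt_or_ge 1 (m+1) with h | h
    swap
    · have hm0 : m = 0 := by omega
      subst hm0
      norm_num [Nat.factorial]
    have hm : 1 ≤ m := by omega
    have ihm := ih hm
    have hmpos : (0:ℝ) < m := by exact_mod_cast hm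
    set t : ℝ := 1/((m:ℝ)+1) with ht
    have h2 : (m:ℝ)/((m:ℝ)+1) ≤ (Real.exp t)⁻¹ := by
      rw [← Real.exp_neg]
      have := Real.add_one_le_exp (-t)
      have heq : -t + 1 = (m:ℝ)/((m:ℝ)+1) := by rw [ht]; field_simp; ring
      linarith [heq ▸ this]
    have h2' : (m:ℝ)/((m:ℝ)+1) * Real.exp t ≤ 1 :=
      calc (m:ℝ)/((m:ℝ)+1) * Real.exp t ≤ (Real.exp t)⁻¹ * Real.exp t :=
            mul_le_mul_of_nonneg_right h2 (Real.exp_pos t).le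
        _ = 1 := inv_mul_cancel₀ (Real.exp_pos t).ne'
    have h1 : Real.exp t ≤ ((m:ℝ)+1)/m := by
      rw [le_div_iff₀ hmpos]
      have hm1 : (0:ℝ) < (m:ℝ)+1 := by positivity
      have := mul_le_mul_of_nonneg_right h2' hm1.le
      calc Real.exp t * m = ((m:ℝ)/((m:ℝ)+1) * Real.exp t) * ((m:ℝ)+1) := by field_simp
        _ ≤ 1 * ((m:ℝ)+1) := mul_le_mul_of_nonneg_right h2' hm1.le
        _ = (m:ℝ)+1 := one_mul _
    have key : Real.exp 1 * (m:ℝ)^(m+1) ≤ ((m:ℝ)+1)^(m+1) := by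
      have e1 : Real.exp 1 = (Real.exp t)^(m+1) := by
        rw [← Real.exp_nat_mul]
        congr 1
        rw [ht]
        field_simp
        norm_num
      rw [e1]
      calc (Real.exp t)^(m+1) * (m:ℝ)^(m+1) ≤ (((m:ℝ)+1)/m)^(m+1) * (m:ℝ)^(m+1) :=
            mul_le_mul_of_nonneg_right (pow_le_pow_left₀ (Real.exp_pos t).le h1 _)
              (by positivity)
        _ = ((m:ℝ)+1)^(m+1) := by rw [div_pow]; field_simp
    -- main step
    have hfs : ((m+1).factorial : ℝ) = ((m:ℝ)+1) * m.factorial := by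
      rw [Nat.factorial_succ]; push_cast; ring
    have hes : Real.exp ((m:ℕ)+1 : ℕ) = Real.exp m * Real.exp 1 := by
      rw [← Real.exp_add]; push_cast; ring_nf
    calc ((m+1).factorial : ℝ) * Real.exp ((m:ℕ)+1 : ℕ)
        = ((m:ℝ)+1) * ((m.factorial : ℝ) * Real.exp m) * Real.exp 1 := by
          rw [hfs, hes]; ring
      _ ≤ ((m:ℝ)+1) * (Real.exp 1 * (m:ℝ)^m * m) * Real.exp 1 := by
          have h3 : (0:ℝ) ≤ ((m:ℝ)+1) := by positivity
          have := mul_le_mul_of_nonneg_left ihm h3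
          exact mul_le_mul_of_nonneg_right this (Real.exp_pos 1).le
      _ = ((m:ℝ)+1) * (Real.exp 1 * (Real.exp 1 * (m:ℝ)^(m+1))) := by ring
      _ ≤ ((m:ℝ)+1) * (Real.exp 1 * ((m:ℝ)+1)^(m+1)) := by
          have h3 : (0:ℝ) ≤ ((m:ℝ)+1) := by positivity
          refine mul_le_mul_of_nonneg_left ?_ h3
          exact mul_le_mul_of_nonneg_left key (Real.exp_pos 1).le
      _ = Real.exp 1 * ((m:ℝ)+1)^(m+1) * ((m:ℝ)+1) := by ring
      _ = Real.exp 1 * ((m+1:ℕ):ℝ)^(m+1) * ((m+1:ℕ):ℝ) := by push_cast; ring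

lemma rpow_sum_logb (c : X → ℝ) (k : X → ℕ) (h : ∀ a, k a ≠ 0 → 0 < c a) :
    (2:ℝ) ^ (∑ a, (k a:ℝ) * Real.logb 2 (c a)) = ∏ a, (c a)^(k a) := by
  rw [Real.rpow_sum_of_pos two_pos]
  refine Finset.prod_congr rfl fun a _ => ?_
  by_cases hka : k a = 0
  · simp [hka]
  · have hca := h a hka
    rw [mul_comm, Real.rpow_mul (by norm_num : (0:ℝ) ≤ 2),
      Real.rpow_logb two_pos (by norm_num) hca, Real.rpow_natCast]

lemma prod_div_pow_mul (n : ℕ) (hn : 1 ≤ n) (k : X → ℕ) (hk : ∑ a, k a = n) :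
    (∏ a, ((k a:ℝ)/n)^(k a)) * (n:ℝ)^n = ∏ a, (k a:ℝ)^(k a) := by
  have hn0 : ((n:ℝ)) ≠ 0 := by positivity
  have h1 : (n:ℝ)^n = ∏ a, (n:ℝ)^(k a) := by
    rw [Finset.prod_pow_eq_pow_sum, hk]
  rw [h1, ← Finset.prod_mul_distrib]
  refine Finset.prod_congr rfl fun a _ => ?_
  rw [← mul_pow, div_mul_cancel₀ _ hn0]

lemma typeCard_pow_le (n : ℕ) (k : X → ℕ) (hk : ∑ a, k a = n) :
    (typeCard n X k : ℝ) * ∏ a, (k a:ℝ)^(k a) ≤ (n:ℝ)^n := by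
  have key : ∑ x : Fin n → X, ∏ i, ((k (x i) : ℝ)) = (n:ℝ)^n := by
    calc ∑ x : Fin n → X, ∏ i, ((k (x i) : ℝ))
        = ∑ x ∈ Fintype.piFinset (fun _ : Fin n => (Finset.univ : Finset X)),
            ∏ i, ((k (x i) : ℝ)) := by rw [Fintype.piFinset_univ]
      _ = ∏ i : Fin n, ∑ a, (k a : ℝ) := (Finset.prod_univ_sum (fun _ : Fin n => (Finset.univ : Finset X)) (fun _ a => (k a : ℝ))).symm
      _ = (n:ℝ)^n := by
          have : ∑ a, (k a:ℝ) = (n:ℝ) := by exact_mod_cast congrArg (Nat.cast (R := ℝ)) hk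
          rw [this, Finset.prod_const, Finset.card_univ, Fintype.card_fin]
  have hrestrict : (typeCard n X k : ℝ) * ∏ a, (k a:ℝ)^(k a)
      = ∑ x ∈ Finset.univ.filter (fun x : Fin n → X => occ x = k),
          ∏ i, ((k (x i) : ℝ)) := by
    rw [Finset.sum_congr rfl (fun x hx => ?_), Finset.sum_const, nsmul_eq_mul]
    · rfl
    · rw [prod_pow_occ x (fun a => (k a : ℝ))]
      rw [(Finset.mem_filter.mp hx).2]
  rw [hrestrict, ← key]
  refine Finset.sum_le_sum_of_subset_of_nonneg (Finset.filter_subset _ _) ?_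
  intro x _ _
  positivity

lemma typeCard_ge (n : ℕ) (hn : 1 ≤ n) (k : X → ℕ) (hk : ∑ a, k a = n)
    (h1 : ∀ a, 1 ≤ k a) :
    (n:ℝ)^n ≤ (Real.exp 1 * n)^(Fintype.card X) * ((typeCard n X k : ℝ) * ∏ a, (k a:ℝ)^(k a)) := by
  have hcast : ((n.factorial : ℕ) : ℝ) = (typeCard n X k : ℝ) * ∏ a, ((k a).factorial : ℝ) := by
    rw [← typeCard_mul_factorial n k hk]; push_cast; ring
  have hexp : Real.exp n = ∏ a, Real.exp (k a) := by
    rw [← Real.exp_sum]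
    congr 1
    exact_mod_cast (congrArg (Nat.cast (R := ℝ)) hk).symm
  have step1 : (n:ℝ)^n ≤ (typeCard n X k : ℝ) * ∏ a, ((k a).factorial * Real.exp (k a)) := by
    calc (n:ℝ)^n ≤ Real.exp n * n.factorial := pow_le_exp_mul_factorial n
      _ = (typeCard n X k : ℝ) * ∏ a, ((k a).factorial * Real.exp (k a)) := by
          rw [hcast, hexp, Finset.prod_mul_distrib]; ring
  have step2 : ∏ a, (((k a).factorial : ℝ) * Real.exp (k a))
      ≤ ∏ a, (Real.exp 1 * (k a:ℝ)^(k a) * (k a)) := by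
    refine Finset.prod_le_prod (fun a _ => by positivity) fun a _ => factorial_mul_exp_le (k a) (h1 a)
  have step3 : ∏ a, (Real.exp 1 * (k a:ℝ)^(k a) * (k a))
      = (Real.exp 1)^(Fintype.card X) * (∏ a, (k a:ℝ)) * ∏ a, (k a:ℝ)^(k a) := by
    rw [Finset.prod_mul_distrib, Finset.prod_mul_distrib, Finset.prod_const,
      Finset.card_univ]
    ring
  have step4 : ∏ a, (k a:ℝ) ≤ (n:ℝ)^(Fintype.card X) := by
    calc ∏ a, (k a:ℝ) ≤ ∏ _a : X, (n:ℝ) := by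
          refine Finset.prod_le_prod (fun a _ => by positivity) fun a _ => ?_
          exact_mod_cast Nat.cast_le.mpr (hk ▸ Finset.single_le_sum (f := k) (fun b _ => Nat.zero_le _) (Finset.mem_univ a))
      _ = (n:ℝ)^(Fintype.card X) := by rw [Finset.prod_const, Finset.card_univ]
  have htc : (0:ℝ) ≤ (typeCard n X k : ℝ) := Nat.cast_nonneg _
  calc (n:ℝ)^n ≤ (typeCard n X k : ℝ) * ∏ a, (((k a).factorial : ℝ) * Real.exp (k a)) := step1
    _ ≤ (typeCard n X k : ℝ) * ((Real.exp 1)^(Fintype.card X) * (∏ a, (k a:ℝ)) * ∏ a, (k a:ℝ)^(k a)) := by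
        rw [← step3]
        exact mul_le_mul_of_nonneg_left step2 htc
    _ ≤ (typeCard n X k : ℝ) * ((Real.exp 1)^(Fintype.card X) * ((n:ℝ)^(Fintype.card X)) * ∏ a, (k a:ℝ)^(k a)) := by
        refine mul_le_mul_of_nonneg_left ?_ htc
        refine mul_le_mul_of_nonneg_right (mul_le_mul_of_nonneg_left step4 (by positivity)) ?_
        positivity
    _ = (Real.exp 1 * n)^(Fintype.card X) * ((typeCard n X k : ℝ) * ∏ a, (k a:ℝ)^(k a)) := by
        rw [mul_pow]; ring

section MainSection

variable (P : X → ℝ) (ρ : ℝ)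

lemma logb_rpow' {x y : ℝ} (hx : 0 < x) : Real.logb 2 (x ^ y) = y * Real.logb 2 x := by
  rw [Real.logb, Real.logb, Real.log_rpow hx, mul_div_assoc]

/-- decomposition: for any subprobability-compatible `Q`,
`∑ Q logb P - (1+ρ) ∑ Q logb Q = (1+ρ)(∑ Q (logb σ - logb Q)) + (1+ρ) logb Z` -/
lemma phi_decomp [Nonempty X] (hP : ∀ a, 0 < P a) (hρ : 0 < ρ) (Q : X → ℝ) (hQ1 : ∑ a, Q a = 1) :
    ∑ a, Q a * Real.logb 2 (P a) - (1+ρ) * ∑ a, Q a * Real.logb 2 (Q a)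
      = (1+ρ) * (∑ a, Q a * (Real.logb 2 ((P a ^ (1/(1+ρ))) / (∑ b, P b ^ (1/(1+ρ)))) - Real.logb 2 (Q a)))
        + (1+ρ) * Real.logb 2 (∑ b, P b ^ (1/(1+ρ))) := by
  set r := 1 + ρ with hr
  have hrpos : 0 < r := by rw [hr]; linarith
  have hrpos : 0 < r := by rw [hr]; linarith
  set Z := ∑ b, P b ^ (1/r) with hZ
  have hZpos : 0 < Z := Finset.sum_pos (fun b _ => Real.rpow_pos_of_pos (hP b) _)
    Finset.univ_nonempty
  have hlogbP : ∀ a, Real.logb 2 (P a) = r * (Real.logb 2 ((P a ^ (1/r))/Z) + Real.logb 2 Z) := by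
    intro a
    rw [Real.logb_div (Real.rpow_pos_of_pos (hP a) _).ne' hZpos.ne']
    rw [logb_rpow' (hP a)]
    have hrne : r ≠ 0 := hrpos.ne'
    field_simp
    ring
  have expand : ∀ a, Q a * Real.logb 2 (P a)
      = r * (Q a * (Real.logb 2 ((P a ^ (1/r))/Z) - Real.logb 2 (Q a)))
        + (r * Real.logb 2 Z) * Q a + r * (Q a * Real.logb 2 (Q a)) := by
    intro a; rw [hlogbP a]; ring
  rw [Finset.sum_congr rfl (fun a _ => expand a)]
  rw [Finset.sum_add_distrib, Finset.sum_add_distrib]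
  simp only [← Finset.mul_sum]
  rw [hQ1]
  ring

lemma gibbs_neg [Nonempty X] (hP : ∀ a, 0 < P a) (hρ : 0 < ρ) (Q : X → ℝ) (hQ0 : ∀ a, 0 ≤ Q a) (hQ1 : ∑ a, Q a = 1) :
    ∑ a, Q a * (Real.logb 2 ((P a ^ (1/(1+ρ))) / (∑ b, P b ^ (1/(1+ρ)))) - Real.logb 2 (Q a)) ≤ 0 := by
  set r := 1 + ρ with hr
  set Z := ∑ b, P b ^ (1/r) with hZ
  have hZpos : 0 < Z := Finset.sum_pos (fun b _ => Real.rpow_pos_of_pos (hP b) _)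
    Finset.univ_nonempty
  set σ : X → ℝ := fun a => (P a ^ (1/r))/Z with hσ
  have hσpos : ∀ a, 0 < σ a := fun a => div_pos (Real.rpow_pos_of_pos (hP a) _) hZpos
  have hσsum : ∑ a, σ a = 1 := by
    rw [hσ, ← Finset.sum_div, ← hZ, div_self hZpos.ne']
  have hlog2 : (0:ℝ) < Real.log 2 := Real.log_pos one_lt_two
  have perterm : ∀ a, Q a * (Real.log (σ a) - Real.log (Q a)) ≤ σ a - Q a := by
    intro a
    rcases (hQ0 a).eq_or_lt with h | h
    · rw [← h]; simpa using (hσpos a).le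
    · rw [← Real.log_div (hσpos a).ne' h.ne']
      have h1 : Real.log (σ a / Q a) ≤ σ a / Q a - 1 :=
        Real.log_le_sub_one_of_pos (div_pos (hσpos a) h)
      have h2 := mul_le_mul_of_nonneg_left h1 h.le
      calc Q a * Real.log (σ a / Q a) ≤ Q a * (σ a / Q a - 1) := h2
        _ = σ a - Q a := by field_simp
  have hsum : ∑ a, Q a * (Real.log (σ a) - Real.log (Q a)) ≤ 0 := by
    calc ∑ a, Q a * (Real.log (σ a) - Real.log (Q a)) ≤ ∑ a, (σ a - Q a) :=
          Finset.sum_le_sum (fun a _ => perterm a)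
      _ = 0 := by rw [Finset.sum_sub_distrib, hσsum, hQ1]; ring
  have conv : ∀ a, Q a * (Real.logb 2 (σ a) - Real.logb 2 (Q a))
      = (Q a * (Real.log (σ a) - Real.log (Q a))) / Real.log 2 := by
    intro a; rw [Real.logb, Real.logb]; field_simp
  calc ∑ a, Q a * (Real.logb 2 (σ a) - Real.logb 2 (Q a))
      = (∑ a, Q a * (Real.log (σ a) - Real.log (Q a))) / Real.log 2 := by
        rw [Finset.sum_congr rfl (fun a _ => conv a), ← Finset.sum_div]
    _ ≤ 0 := div_nonpos_of_nonpos_of_nonneg hsum hlog2.le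

/-- The set in the theorem statement has supremum `(1+ρ) logb 2 Z`. -/
lemma sSup_eq_E [Nonempty X] (hP : ∀ a, 0 < P a) (hρ : 0 < ρ) :
    sSup {e : ℝ | ∃ Q : X → ℝ, (∀ a, 0 ≤ Q a) ∧ (∑ a : X, Q a) = 1 ∧
        e = ρ * (-∑ a : X, Q a * Real.logb 2 (Q a)) -
              ∑ a : X, Q a * Real.logb 2 (Q a / P a)}
      = (1+ρ) * Real.logb 2 (∑ b, P b ^ (1/(1+ρ))) := by
  have hZpos : 0 < ∑ b, P b ^ (1/(1+ρ)) := Finset.sum_pos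
    (fun b _ => Real.rpow_pos_of_pos (hP b) _) Finset.univ_nonempty
  have hσpos : ∀ a, 0 < (P a ^ (1/(1+ρ))) / (∑ b, P b ^ (1/(1+ρ))) :=
    fun a => div_pos (Real.rpow_pos_of_pos (hP a) _) hZpos
  have hσsum : ∑ a, (P a ^ (1/(1+ρ))) / (∑ b, P b ^ (1/(1+ρ))) = 1 := by
    rw [← Finset.sum_div, div_self hZpos.ne']
  have value_form : ∀ Q : X → ℝ, (∀ a, 0 ≤ Q a) →
      ρ * (-∑ a : X, Q a * Real.logb 2 (Q a)) - ∑ a : X, Q a * Real.logb 2 (Q a / P a)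
        = ∑ a, Q a * Real.logb 2 (P a) - (1+ρ) * ∑ a, Q a * Real.logb 2 (Q a) := by
    intro Q hQ0
    have h1 : ∀ a, Q a * Real.logb 2 (Q a / P a)
        = Q a * Real.logb 2 (Q a) - Q a * Real.logb 2 (P a) := by
      intro a
      rcases (hQ0 a).eq_or_lt with h | h
      · rw [← h]; ring_nf
      · rw [Real.logb_div h.ne' (hP a).ne']; ring
    rw [Finset.sum_congr rfl (fun a _ => h1 a), Finset.sum_sub_distrib]
    ring
  apply IsGreatest.csSup_eq
  constructor
  · refine ⟨fun a => (P a ^ (1/(1+ρ))) / (∑ b, P b ^ (1/(1+ρ))),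
      fun a => (hσpos a).le, hσsum, ?_⟩
    rw [value_form _ (fun a => (hσpos a).le), phi_decomp P ρ hP hρ _ hσsum]
    have hz : ∑ a, (P a ^ (1/(1+ρ))) / (∑ b, P b ^ (1/(1+ρ)))
        * (Real.logb 2 ((P a ^ (1/(1+ρ))) / (∑ b, P b ^ (1/(1+ρ))))
            - Real.logb 2 ((P a ^ (1/(1+ρ))) / (∑ b, P b ^ (1/(1+ρ))))) = 0 :=
      Finset.sum_eq_zero fun a _ => by ring
    rw [hz]
    ring
  · rintro e ⟨Q, hQ0, hQ1, rfl⟩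
    rw [value_form Q hQ0, phi_decomp P ρ hP hρ Q hQ1]
    have hg := gibbs_neg P ρ hP hρ Q hQ0 hQ1
    nlinarith [hg]




lemma scaled_gibbs [Nonempty X] (hP : ∀ a, 0 < P a) (hρ : 0 < ρ) (n : ℕ) (hn : 1 ≤ n)
    (k : X → ℕ) (hk : ∑ a, k a = n) :
    (∑ a, (k a:ℝ) * Real.logb 2 (P a)) - (1+ρ) * ∑ a, (k a:ℝ) * Real.logb 2 ((k a:ℝ)/n)
      ≤ (n:ℝ) * ((1+ρ) * Real.logb 2 (∑ b, P b ^ (1/(1+ρ)))) := by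
  have hn0 : ((n:ℝ)) ≠ 0 := by positivity
  have hnpos : (0:ℝ) < n := by positivity
  have hQ1 : ∑ a, (k a:ℝ)/(n:ℝ) = 1 := by
    rw [← Finset.sum_div]
    rw [show ∑ a, ((k a:ℝ)) = ((n:ℝ)) by exact_mod_cast congrArg (Nat.cast (R := ℝ)) hk]
    exact div_self hn0
  have hQ0 : ∀ a, 0 ≤ (k a:ℝ)/(n:ℝ) := fun a => by positivity
  have hphi := phi_decomp P ρ hP hρ (fun a => (k a:ℝ)/n) hQ1
  have hgib := gibbs_neg P ρ hP hρ (fun a => (k a:ℝ)/n) hQ0 hQ1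
  have hle : ∑ a, (k a:ℝ)/n * Real.logb 2 (P a)
      - (1+ρ) * ∑ a, (k a:ℝ)/n * Real.logb 2 ((k a:ℝ)/n)
      ≤ (1+ρ) * Real.logb 2 (∑ b, P b ^ (1/(1+ρ))) := by
    rw [hphi]
    nlinarith [hgib]
  have hB : ∑ a, (k a:ℝ) * Real.logb 2 (P a) = (n:ℝ) * ∑ a, (k a:ℝ)/n * Real.logb 2 (P a) := by
    rw [Finset.mul_sum]
    exact Finset.sum_congr rfl fun a _ => by field_simp
  have hA : ∑ a, (k a:ℝ) * Real.logb 2 ((k a:ℝ)/n)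
      = (n:ℝ) * ∑ a, (k a:ℝ)/n * Real.logb 2 ((k a:ℝ)/n) := by
    rw [Finset.mul_sum]
    exact Finset.sum_congr rfl fun a _ => by field_simp
  rw [hB, hA]
  calc (n:ℝ) * (∑ a, (k a:ℝ)/n * Real.logb 2 (P a))
        - (1+ρ) * ((n:ℝ) * ∑ a, (k a:ℝ)/n * Real.logb 2 ((k a:ℝ)/n))
      = (n:ℝ) * ((∑ a, (k a:ℝ)/n * Real.logb 2 (P a))
          - (1+ρ) * ∑ a, (k a:ℝ)/n * Real.logb 2 ((k a:ℝ)/n)) := by ring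
    _ ≤ (n:ℝ) * ((1+ρ) * Real.logb 2 (∑ b, P b ^ (1/(1+ρ)))) :=
        mul_le_mul_of_nonneg_left hle hnpos.le

lemma Tsum_eq (n : ℕ) (hn : 1 ≤ n) :
    ∑ x : Fin n → X, (∏ i, P (x i)) * (2 : ℝ) ^ ((n : ℝ) * ρ * empEnt x)
      = ∑ k ∈ Finset.univ.image (fun x : Fin n → X => occ x),
          (typeCard n X k : ℝ) *
            ((∏ a, P a ^ (k a)) *
              (2:ℝ)^(ρ * (-(∑ a, (k a:ℝ) * Real.logb 2 ((k a:ℝ)/(n:ℝ)))))) := by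
  have hn0 : ((n:ℝ)) ≠ 0 := by positivity
  have hterm : ∀ x : Fin n → X, (∏ i, P (x i)) * (2 : ℝ) ^ ((n : ℝ) * ρ * empEnt x)
      = (fun k : X → ℕ => (∏ a, P a ^ (k a)) *
          (2:ℝ)^(ρ * (-(∑ a, (k a:ℝ) * Real.logb 2 ((k a:ℝ)/(n:ℝ)))))) (fun a => occ x a) := by
    intro x
    simp only []
    rw [prod_pow_occ x P]
    congr 2
    rw [empEnt]
    rw [mul_neg, mul_neg, neg_eq_iff_eq_neg, neg_neg]
    rw [mul_comm ((n:ℝ)) ρ, mul_assoc, Finset.mul_sum]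
    congr 1
    exact Finset.sum_congr rfl fun a _ => by field_simp
  rw [Finset.sum_congr rfl fun x _ => hterm x]
  rw [Finset.sum_comp (fun k : X → ℕ => (∏ a, P a ^ (k a)) *
          (2:ℝ)^(ρ * (-(∑ a, (k a:ℝ) * Real.logb 2 ((k a:ℝ)/(n:ℝ)))))) (fun x => occ x)]
  exact Finset.sum_congr rfl fun k _ => by rw [nsmul_eq_mul]; rfl

lemma type_term_le [Nonempty X] (hP : ∀ a, 0 < P a) (hρ : 0 < ρ) (n : ℕ) (hn : 1 ≤ n)
    (k : X → ℕ) (hk : ∑ a, k a = n) :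
    (typeCard n X k : ℝ) *
        ((∏ a, P a ^ (k a)) *
          (2:ℝ)^(ρ * (-(∑ a, (k a:ℝ) * Real.logb 2 ((k a:ℝ)/(n:ℝ))))))
      ≤ (2:ℝ)^((n:ℝ) * ((1+ρ) * Real.logb 2 (∑ b, P b ^ (1/(1+ρ))))) := by
  have hnpos : (0:ℝ) < n := by positivity
  set A := ∑ a, (k a:ℝ) * Real.logb 2 ((k a:ℝ)/(n:ℝ)) with hAdef
  set B := ∑ a, (k a:ℝ) * Real.logb 2 (P a) with hBdef
  have h2A : (2:ℝ)^A = ∏ a, (((k a:ℝ)/n))^(k a) :=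
    rpow_sum_logb _ k fun a ha => by
      have : 0 < (k a : ℝ) := by exact_mod_cast Nat.pos_of_ne_zero ha
      positivity
  have h2B : (2:ℝ)^B = ∏ a, (P a)^(k a) := rpow_sum_logb P k fun a _ => hP a
  have hAprod : (2:ℝ)^A * (n:ℝ)^n = ∏ a, (k a:ℝ)^(k a) := by
    rw [h2A]; exact prod_div_pow_mul n hn k hk
  have hnn : (0:ℝ) < (n:ℝ)^n := by positivity
  have htc2A : (typeCard n X k : ℝ) * (2:ℝ)^A ≤ 1 := by
    have h := typeCard_pow_le n k hk
    rw [← hAprod] at h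
    have : ((typeCard n X k : ℝ) * (2:ℝ)^A) * (n:ℝ)^n ≤ 1 * (n:ℝ)^n := by
      rw [one_mul]; linarith [h]
    exact le_of_mul_le_mul_right this hnn
  have hsplit : (2:ℝ)^B * (2:ℝ)^(ρ * (-A)) = (2:ℝ)^A * (2:ℝ)^(B - (1+ρ)*A) := by
    rw [← Real.rpow_add two_pos, ← Real.rpow_add two_pos]
    congr 1
    ring
  have htc : (0:ℝ) ≤ (typeCard n X k : ℝ) := Nat.cast_nonneg _
  calc (typeCard n X k : ℝ) * ((∏ a, P a ^ (k a)) * (2:ℝ)^(ρ * (-A)))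
      = ((typeCard n X k : ℝ) * (2:ℝ)^A) * (2:ℝ)^(B - (1+ρ)*A) := by
        rw [← h2B, ← mul_assoc, mul_assoc _ ((2:ℝ)^B), hsplit]; ring
    _ ≤ 1 * (2:ℝ)^(B - (1+ρ)*A) := by
        exact mul_le_mul_of_nonneg_right htc2A (Real.rpow_pos_of_pos two_pos _).le
    _ = (2:ℝ)^(B - (1+ρ)*A) := one_mul _
    _ ≤ (2:ℝ)^((n:ℝ) * ((1+ρ) * Real.logb 2 (∑ b, P b ^ (1/(1+ρ))))) := by
        apply Real.rpow_le_rpow_of_exponent_le one_le_two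
        exact scaled_gibbs P ρ hP hρ n hn k hk

lemma type_term_ge [Nonempty X] (hP : ∀ a, 0 < P a) (hρ : 0 < ρ) (n : ℕ) (hn : 1 ≤ n)
    (k : X → ℕ) (hk : ∑ a, k a = n) (h1 : ∀ a, 1 ≤ k a) :
    (2:ℝ)^((∑ a, (k a:ℝ) * Real.logb 2 (P a))
        - (1+ρ) * ∑ a, (k a:ℝ) * Real.logb 2 ((k a:ℝ)/n))
      / (Real.exp 1 * n)^(Fintype.card X)
    ≤ (typeCard n X k : ℝ) *
        ((∏ a, P a ^ (k a)) *
          (2:ℝ)^(ρ * (-(∑ a, (k a:ℝ) * Real.logb 2 ((k a:ℝ)/(n:ℝ)))))) := by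
  have hnpos : (0:ℝ) < n := by positivity
  set A := ∑ a, (k a:ℝ) * Real.logb 2 ((k a:ℝ)/(n:ℝ)) with hAdef
  set B := ∑ a, (k a:ℝ) * Real.logb 2 (P a) with hBdef
  have h2A : (2:ℝ)^A = ∏ a, (((k a:ℝ)/n))^(k a) :=
    rpow_sum_logb _ k fun a ha => by
      have : 0 < (k a : ℝ) := by exact_mod_cast Nat.pos_of_ne_zero ha
      positivity
  have h2B : (2:ℝ)^B = ∏ a, (P a)^(k a) := rpow_sum_logb P k fun a _ => hP a
  have hAprod : (2:ℝ)^A * (n:ℝ)^n = ∏ a, (k a:ℝ)^(k a) := by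
    rw [h2A]; exact prod_div_pow_mul n hn k hk
  have hnn : (0:ℝ) < (n:ℝ)^n := by positivity
  have hC : (0:ℝ) < (Real.exp 1 * n)^(Fintype.card X) := by positivity
  have htc2A : 1 ≤ (Real.exp 1 * n)^(Fintype.card X) * ((typeCard n X k : ℝ) * (2:ℝ)^A) := by
    have h := typeCard_ge n hn k hk h1
    rw [← hAprod] at h
    have h' : 1 * (n:ℝ)^n
        ≤ ((Real.exp 1 * n)^(Fintype.card X) * ((typeCard n X k : ℝ) * (2:ℝ)^A)) * (n:ℝ)^n := by
      rw [one_mul]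
      calc (n:ℝ)^n ≤ (Real.exp 1 * n)^(Fintype.card X)
            * ((typeCard n X k : ℝ) * ((2:ℝ)^A * (n:ℝ)^n)) := h
        _ = ((Real.exp 1 * n)^(Fintype.card X) * ((typeCard n X k : ℝ) * (2:ℝ)^A)) * (n:ℝ)^n := by
            ring
    exact le_of_mul_le_mul_right h' hnn
  have hsplit : (2:ℝ)^B * (2:ℝ)^(ρ * (-A)) = (2:ℝ)^A * (2:ℝ)^(B - (1+ρ)*A) := by
    rw [← Real.rpow_add two_pos, ← Real.rpow_add two_pos]
    congr 1
    ring
  have heq : (typeCard n X k : ℝ) * ((∏ a, P a ^ (k a)) * (2:ℝ)^(ρ * (-A)))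
      = ((typeCard n X k : ℝ) * (2:ℝ)^A) * (2:ℝ)^(B - (1+ρ)*A) := by
    rw [← h2B, ← mul_assoc, mul_assoc _ ((2:ℝ)^B), hsplit]; ring
  rw [heq, div_le_iff₀ hC]
  have hpow : (0:ℝ) < (2:ℝ)^(B - (1+ρ)*A) := Real.rpow_pos_of_pos two_pos _
  nlinarith [htc2A, hpow, hC]


theorem main_limit [Nonempty X] (P : X → ℝ) (hP : ∀ a, 0 < P a)
    (hPsum : ∑ a : X, P a = 1) (ρ : ℝ) (hρ : 0 < ρ) :
    Filter.Tendsto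
      (fun n : ℕ =>
        (1 / (n : ℝ)) * Real.logb 2
          (∑ x : Fin n → X, (∏ i, P (x i)) * (2 : ℝ) ^ ((n : ℝ) * ρ * empEnt x)))
      Filter.atTop
      (nhds ((1+ρ) * Real.logb 2 (∑ b, P b ^ (1/(1+ρ))))) := by
  classical
  set d : ℕ := Fintype.card X with hd
  have hZpos : 0 < ∑ b, P b ^ (1/(1+ρ)) := Finset.sum_pos
    (fun b _ => Real.rpow_pos_of_pos (hP b) _) Finset.univ_nonempty
  set E : ℝ := (1+ρ) * Real.logb 2 (∑ b, P b ^ (1/(1+ρ))) with hE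
  set σ : X → ℝ := fun a => (P a ^ (1/(1+ρ))) / (∑ b, P b ^ (1/(1+ρ))) with hσ
  have hσpos : ∀ a, 0 < σ a := fun a => div_pos (Real.rpow_pos_of_pos (hP a) _) hZpos
  have hσsum : ∑ a, σ a = 1 := by
    rw [hσ, ← Finset.sum_div, div_self hZpos.ne']
  have a₀ : X := Classical.arbitrary X
  set s : ℕ → ℕ := fun n => ∑ b ∈ Finset.univ.erase a₀, ⌊σ b * (n:ℝ)⌋₊ with hs
  have hσerase : ∑ b ∈ Finset.univ.erase a₀, σ b = 1 - σ a₀ := by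
    have := Finset.add_sum_erase Finset.univ σ (Finset.mem_univ a₀)
    rw [hσsum] at this
    linarith
  have hs_le : ∀ n : ℕ, s n ≤ n := by
    intro n
    have hcast : ((s n : ℕ) : ℝ) ≤ (n:ℝ) := by
      rw [hs]
      push_cast
      calc ∑ b ∈ Finset.univ.erase a₀, ((⌊σ b * (n:ℝ)⌋₊ : ℕ):ℝ)
          ≤ ∑ b ∈ Finset.univ.erase a₀, σ b * (n:ℝ) :=
            Finset.sum_le_sum fun b _ => Nat.floor_le (mul_nonneg (hσpos b).le (Nat.cast_nonneg n))
        _ = (1 - σ a₀) * n := by rw [← Finset.sum_mul, hσerase]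
        _ ≤ 1 * n := by
            have := (hσpos a₀).le
            have : (0:ℝ) ≤ n := Nat.cast_nonneg n
            nlinarith [(hσpos a₀).le, Nat.cast_nonneg (α := ℝ) n]
        _ = n := one_mul _
    exact_mod_cast hcast
  set kf : ℕ → X → ℕ := fun n a => if a = a₀ then n - s n else ⌊σ a * (n:ℝ)⌋₊ with hkf
  have hksum : ∀ n, ∑ a, kf n a = n := by
    intro n
    rw [← Finset.add_sum_erase _ _ (Finset.mem_univ a₀)]
    have h2 : ∑ b ∈ Finset.univ.erase a₀, kf n b = s n :=
      Finset.sum_congr rfl fun b hb => by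
        rw [hkf]; simp only [if_neg (Finset.ne_of_mem_erase hb)]
    rw [h2, hkf]
    simp only [if_pos rfl]
    exact Nat.sub_add_cancel (hs_le n)
  have floor_div_tendsto : ∀ b : X, Tendsto (fun n : ℕ => ((⌊σ b * (n:ℝ)⌋₊ : ℕ):ℝ)/(n:ℝ))
      atTop (nhds (σ b)) := fun b =>
    (tendsto_nat_floor_mul_div_atTop (hσpos b).le).comp tendsto_natCast_atTop_atTop
  have hconv : ∀ a : X, Tendsto (fun n : ℕ => ((kf n a : ℕ):ℝ)/(n:ℝ)) atTop (nhds (σ a)) := by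
    intro a
    by_cases ha : a = a₀
    · rw [ha]
      have hsn : Tendsto (fun n : ℕ => ((s n : ℕ):ℝ)/(n:ℝ)) atTop
          (nhds (∑ b ∈ Finset.univ.erase a₀, σ b)) := by
        have heq : ∀ n : ℕ, ((s n : ℕ):ℝ)/(n:ℝ)
            = ∑ b ∈ Finset.univ.erase a₀, ((⌊σ b * (n:ℝ)⌋₊ : ℕ):ℝ)/(n:ℝ) := by
          intro n
          rw [hs]
          push_cast
          rw [Finset.sum_div]
        rw [funext heq]
        exact tendsto_finset_sum _ fun b _ => floor_div_tendsto b
      have h1 : Tendsto (fun n : ℕ => 1 - ((s n : ℕ):ℝ)/(n:ℝ)) atTop (nhds (σ a₀)) := by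
        have := tendsto_const_nhds (x := (1:ℝ)) (f := atTop (α := ℕ)) |>.sub hsn
        rw [hσerase] at this
        simpa using this
      refine Tendsto.congr' ?_ h1
      filter_upwards [eventually_ge_atTop 1] with n hn
      have hn0 : ((n:ℝ)) ≠ 0 := by positivity
      have hkv : kf n a₀ = n - s n := by rw [hkf]; simp
      rw [hkv, Nat.cast_sub (hs_le n)]
      field_simp
    · have := floor_div_tendsto a
      refine Tendsto.congr' ?_ this
      filter_upwards with n
      rw [hkf]
      simp only [if_neg ha]
  -- eventual goodness
  have hgood : ∀ᶠ n : ℕ in atTop, 1 ≤ n ∧ ∀ a, 1 ≤ kf n a := by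
    refine (eventually_ge_atTop 1).and ?_
    refine Filter.eventually_all.mpr fun a => ?_
    have hev : ∀ᶠ n : ℕ in atTop, ((kf n a : ℕ):ℝ)/(n:ℝ) ∈ Set.Ioi (0:ℝ) :=
      (hconv a).eventually (Ioi_mem_nhds (hσpos a))
    filter_upwards [hev] with n hn
    by_contra h0
    have : kf n a = 0 := by omega
    rw [this] at hn
    simp at hn
  -- log limits
  have hlogdiv : Tendsto (fun x : ℝ => Real.log x / x) atTop (nhds 0) := by
    have := Real.isLittleO_log_id_atTop.tendsto_div_nhds_zero
    simpa using this
  have hlogn : Tendsto (fun n : ℕ => Real.log n / n) atTop (nhds 0) :=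
    hlogdiv.comp tendsto_natCast_atTop_atTop
  -- lower comparison function tendsto
  have hlow : Tendsto (fun n : ℕ =>
      (∑ a, (((kf n a:ℕ):ℝ)/n * Real.logb 2 (P a)
        - (1+ρ) * (((kf n a:ℕ):ℝ)/n * Real.logb 2 (((kf n a:ℕ):ℝ)/n))))
      - (d:ℝ) * Real.logb 2 (Real.exp 1 * n) / n) atTop (nhds E) := by
    have h1 : Tendsto (fun n : ℕ => ∑ a, (((kf n a:ℕ):ℝ)/n * Real.logb 2 (P a)
        - (1+ρ) * (((kf n a:ℕ):ℝ)/n * Real.logb 2 (((kf n a:ℕ):ℝ)/n)))) atTop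
        (nhds (∑ a, (σ a * Real.logb 2 (P a) - (1+ρ) * (σ a * Real.logb 2 (σ a))))) := by
      refine tendsto_finset_sum _ fun a _ => ?_
      have hcont : ContinuousAt
          (fun q : ℝ => q * Real.logb 2 (P a) - (1+ρ) * (q * Real.logb 2 q)) (σ a) := by
        have h2 : ContinuousAt (fun q : ℝ => Real.logb 2 q) (σ a) :=
          Real.continuousAt_logb (hσpos a).ne'
        exact (continuousAt_id.mul continuousAt_const).sub
          (continuousAt_const.mul (continuousAt_id.mul h2))
      exact hcont.tendsto.comp (hconv a)
    have hφσ : ∑ a, (σ a * Real.logb 2 (P a) - (1+ρ) * (σ a * Real.logb 2 (σ a))) = E := by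
      rw [Finset.sum_sub_distrib, ← Finset.mul_sum,
        phi_decomp P ρ hP hρ σ hσsum]
      have hz : ∑ a, σ a * (Real.logb 2 ((P a ^ (1/(1+ρ))) / (∑ b, P b ^ (1/(1+ρ))))
          - Real.logb 2 (σ a)) = 0 :=
        Finset.sum_eq_zero fun a _ => by simp only [hσ]; ring
      rw [hz, hE]
      ring
    have h2 : Tendsto (fun n : ℕ => (d:ℝ) * Real.logb 2 (Real.exp 1 * n) / n) atTop (nhds 0) := by
      have haux : Tendsto (fun n : ℕ => ((d:ℝ)/Real.log 2) * (1/n)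
          + ((d:ℝ)/Real.log 2) * (Real.log n / n)) atTop (nhds 0) := by
        have := (tendsto_one_div_atTop_nhds_zero_nat.const_mul ((d:ℝ)/Real.log 2)).add
          (hlogn.const_mul ((d:ℝ)/Real.log 2))
        simpa using this
      refine Tendsto.congr' ?_ haux
      filter_upwards [eventually_ge_atTop 1] with n hn
      have hn0 : ((n:ℝ)) ≠ 0 := by positivity
      have hl2 : Real.log 2 ≠ 0 := (Real.log_pos one_lt_two).ne'
      rw [Real.logb, Real.log_mul (Real.exp_ne_zero 1) hn0, Real.log_exp]
      field_simp
    have h3 := h1.sub h2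
    rw [hφσ, sub_zero] at h3
    exact h3
  -- upper comparison function tendsto
  have hup : Tendsto (fun n : ℕ => (d:ℝ) * Real.logb 2 ((n:ℝ)+1) / n + E) atTop (nhds E) := by
    have h5 : Tendsto (fun n : ℕ => Real.log ((n:ℝ)+1)/((n:ℝ)+1)) atTop (nhds 0) :=
      hlogdiv.comp (tendsto_atTop_add_const_right atTop 1 tendsto_natCast_atTop_atTop)
    have h6 : Tendsto (fun n : ℕ => ((n:ℝ)+1)/n) atTop (nhds 1) := by
      have h := tendsto_const_nhds (x := (1:ℝ)) (f := atTop (α := ℕ)) |>.add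
        tendsto_one_div_atTop_nhds_zero_nat
      rw [add_zero] at h
      refine Tendsto.congr' ?_ h
      filter_upwards [eventually_ge_atTop 1] with n hn
      have hn0 : ((n:ℝ)) ≠ 0 := by positivity
      field_simp
    have h7 : Tendsto (fun n : ℕ => Real.log ((n:ℝ)+1)/n) atTop (nhds 0) := by
      have h := h5.mul h6
      rw [zero_mul] at h
      refine Tendsto.congr' ?_ h
      filter_upwards [eventually_ge_atTop 1] with n hn
      have hn0 : ((n:ℝ)) ≠ 0 := by positivity
      have hn1 : ((n:ℝ)+1) ≠ 0 := by positivity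
      field_simp
    have h8 : Tendsto (fun n : ℕ => (d:ℝ) * Real.logb 2 ((n:ℝ)+1) / n + E) atTop
        (nhds (((d:ℝ)/Real.log 2) * 0 + E)) := by
      refine Tendsto.add (Tendsto.congr' ?_ (h7.const_mul ((d:ℝ)/Real.log 2))) tendsto_const_nhds
      filter_upwards with n
      rw [Real.logb]
      ring
    simpa using h8
  refine tendsto_of_tendsto_of_tendsto_of_le_of_le' hlow hup ?_ ?_
  · -- lower bound eventually
    filter_upwards [hgood] with n hn
    obtain ⟨hn1, hka⟩ := hn
    have hn0 : ((n:ℝ)) ≠ 0 := by positivity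
    have hnpos : (0:ℝ) < n := by positivity
    set B : ℝ := ∑ a, ((kf n a:ℕ):ℝ) * Real.logb 2 (P a) with hB
    set A : ℝ := ∑ a, ((kf n a:ℕ):ℝ) * Real.logb 2 (((kf n a:ℕ):ℝ)/(n:ℝ)) with hA
    have hkmem : kf n ∈ Finset.univ.image (fun x : Fin n → X => occ x) := by
      have htc : typeCard n X (kf n) ≠ 0 := by
        intro h0
        have h := typeCard_mul_factorial n (kf n) (hksum n)
        rw [h0, zero_mul] at h
        exact (Nat.factorial_pos n).ne' h.symm
      have hne : (Finset.univ.filter fun x : Fin n → X => occ x = kf n).Nonempty := by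
        rw [← Finset.card_pos]
        exact Nat.pos_of_ne_zero htc
      obtain ⟨x, hx⟩ := hne
      exact Finset.mem_image.mpr ⟨x, Finset.mem_univ x, (Finset.mem_filter.mp hx).2⟩
    have hterm_nonneg : ∀ k' ∈ Finset.univ.image (fun x : Fin n → X => occ x),
        (0:ℝ) ≤ (typeCard n X k' : ℝ) *
          ((∏ a, P a ^ (k' a)) *
            (2:ℝ)^(ρ * (-(∑ a, (k' a:ℝ) * Real.logb 2 ((k' a:ℝ)/(n:ℝ)))))) := by
      intro k' _
      have h1 : (0:ℝ) ≤ ∏ a, P a ^ (k' a) :=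
        Finset.prod_nonneg fun a _ => pow_nonneg (hP a).le _
      have h2 : (0:ℝ) ≤ (2:ℝ)^(ρ * (-(∑ a, (k' a:ℝ) * Real.logb 2 ((k' a:ℝ)/(n:ℝ))))) :=
        (Real.rpow_pos_of_pos two_pos _).le
      positivity
    have hTge : (2:ℝ)^(B - (1+ρ)*A) / (Real.exp 1 * n)^d
        ≤ ∑ x : Fin n → X, (∏ i, P (x i)) * (2 : ℝ) ^ ((n : ℝ) * ρ * empEnt x) := by
      rw [Tsum_eq P ρ n hn1]
      calc (2:ℝ)^(B - (1+ρ)*A) / (Real.exp 1 * n)^d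
          ≤ (typeCard n X (kf n) : ℝ) *
            ((∏ a, P a ^ (kf n a)) *
              (2:ℝ)^(ρ * (-(∑ a, ((kf n a:ℕ):ℝ) * Real.logb 2 (((kf n a:ℕ):ℝ)/(n:ℝ)))))) := by
            have := type_term_ge P ρ hP hρ n hn1 (kf n) (hksum n) hka
            rw [hB, hA]
            exact this
        _ ≤ _ := Finset.single_le_sum hterm_nonneg hkmem
    have hLpos : (0:ℝ) < (2:ℝ)^(B - (1+ρ)*A) / (Real.exp 1 * n)^d := by
      apply div_pos (Real.rpow_pos_of_pos two_pos _)
      positivity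
    have hTpos : (0:ℝ) < ∑ x : Fin n → X, (∏ i, P (x i)) * (2 : ℝ) ^ ((n : ℝ) * ρ * empEnt x) :=
      lt_of_lt_of_le hLpos hTge
    have hmono := Real.logb_le_logb_of_le one_lt_two hLpos hTge
    have hlogL : Real.logb 2 ((2:ℝ)^(B - (1+ρ)*A) / (Real.exp 1 * n)^d)
        = (B - (1+ρ)*A) - (d:ℝ) * Real.logb 2 (Real.exp 1 * n) := by
      rw [Real.logb_div (Real.rpow_pos_of_pos two_pos _).ne' (by positivity),
        Real.logb_rpow two_pos (by norm_num), Real.logb_pow]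
    have hstep : (1/(n:ℝ)) * ((B - (1+ρ)*A) - (d:ℝ) * Real.logb 2 (Real.exp 1 * n))
        ≤ (1/(n:ℝ)) * Real.logb 2
          (∑ x : Fin n → X, (∏ i, P (x i)) * (2 : ℝ) ^ ((n : ℝ) * ρ * empEnt x)) := by
      rw [← hlogL]
      exact mul_le_mul_of_nonneg_left hmono (by positivity)
    refine le_trans (le_of_eq ?_) hstep
    have hptw : ∀ a : X, ((kf n a:ℕ):ℝ)/n * Real.logb 2 (P a)
        - (1+ρ) * (((kf n a:ℕ):ℝ)/n * Real.logb 2 (((kf n a:ℕ):ℝ)/n))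
        = (1/(n:ℝ)) * (((kf n a:ℕ):ℝ) * Real.logb 2 (P a)
          - (1+ρ) * (((kf n a:ℕ):ℝ) * Real.logb 2 (((kf n a:ℕ):ℝ)/n))) := by
      intro a
      field_simp
    rw [Finset.sum_congr rfl (fun a _ => hptw a), ← Finset.mul_sum, Finset.sum_sub_distrib,
      ← Finset.mul_sum, ← hB, ← hA]
    ring
  · -- upper bound eventually
    filter_upwards [hgood] with n hn
    obtain ⟨hn1, hka⟩ := hn
    have hn0 : ((n:ℝ)) ≠ 0 := by positivity
    have hterm_nonneg : ∀ k' ∈ Finset.univ.image (fun x : Fin n → X => occ x),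
        (0:ℝ) ≤ (typeCard n X k' : ℝ) *
          ((∏ a, P a ^ (k' a)) *
            (2:ℝ)^(ρ * (-(∑ a, (k' a:ℝ) * Real.logb 2 ((k' a:ℝ)/(n:ℝ)))))) := by
      intro k' _
      have h1 : (0:ℝ) ≤ ∏ a, P a ^ (k' a) :=
        Finset.prod_nonneg fun a _ => pow_nonneg (hP a).le _
      have h2 : (0:ℝ) ≤ (2:ℝ)^(ρ * (-(∑ a, (k' a:ℝ) * Real.logb 2 ((k' a:ℝ)/(n:ℝ))))) :=
        (Real.rpow_pos_of_pos two_pos _).le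
      positivity
    -- positivity of T via lower bound
    have hTpos : (0:ℝ) < ∑ x : Fin n → X, (∏ i, P (x i)) * (2 : ℝ) ^ ((n : ℝ) * ρ * empEnt x) := by
      have hkmem : kf n ∈ Finset.univ.image (fun x : Fin n → X => occ x) := by
        have htc : typeCard n X (kf n) ≠ 0 := by
          intro h0
          have h := typeCard_mul_factorial n (kf n) (hksum n)
          rw [h0, zero_mul] at h
          exact (Nat.factorial_pos n).ne' h.symm
        have hne : (Finset.univ.filter fun x : Fin n → X => occ x = kf n).Nonempty := by
          rw [← Finset.card_pos]
          exact Nat.pos_of_ne_zero htc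
        obtain ⟨x, hx⟩ := hne
        exact Finset.mem_image.mpr ⟨x, Finset.mem_univ x, (Finset.mem_filter.mp hx).2⟩
      have h1 := type_term_ge P ρ hP hρ n hn1 (kf n) (hksum n) hka
      have h2 : (0:ℝ) < (2:ℝ)^((∑ a, ((kf n a:ℕ):ℝ) * Real.logb 2 (P a))
          - (1+ρ) * ∑ a, ((kf n a:ℕ):ℝ) * Real.logb 2 (((kf n a:ℕ):ℝ)/(n:ℝ)))
          / (Real.exp 1 * n)^d := by
        apply div_pos (Real.rpow_pos_of_pos two_pos _)
        positivity
      calc (0:ℝ) < _ := h2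
        _ ≤ _ := by
          rw [Tsum_eq P ρ n hn1]
          exact le_trans h1 (Finset.single_le_sum hterm_nonneg hkmem)
    have hcardbound : ((Finset.univ.image (fun x : Fin n → X => occ x)).card : ℝ)
        ≤ ((n:ℝ)+1)^d := by
      have hsub : Finset.univ.image (fun x : Fin n → X => occ x)
          ⊆ Fintype.piFinset (fun _ : X => Finset.range (n+1)) := by
        intro k hk
        rw [Fintype.mem_piFinset]
        intro a
        rw [Finset.mem_range]
        obtain ⟨x, -, hx⟩ := Finset.mem_image.mp hk
        have hle : occ x a ≤ n := by
          calc occ x a ≤ ∑ b, occ x b :=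
                Finset.single_le_sum (f := fun b => occ x b) (fun b _ => Nat.zero_le _)
                  (Finset.mem_univ a)
            _ = n := sum_occ x
        rw [← hx]
        omega
      have hc := Finset.card_le_card hsub
      have hcardpi : (Fintype.piFinset (fun _ : X => Finset.range (n+1))).card = (n+1)^d := by
        rw [Fintype.card_piFinset]
        simp [Finset.card_range, hd, Finset.prod_const]
      calc ((Finset.univ.image (fun x : Fin n → X => occ x)).card : ℝ)
          ≤ (((n+1)^d : ℕ) : ℝ) := by exact_mod_cast hcardpi ▸ hc
        _ = ((n:ℝ)+1)^d := by push_cast; ring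
    have hTle : ∑ x : Fin n → X, (∏ i, P (x i)) * (2 : ℝ) ^ ((n : ℝ) * ρ * empEnt x)
        ≤ ((n:ℝ)+1)^d * (2:ℝ)^((n:ℝ) * E) := by
      rw [Tsum_eq P ρ n hn1]
      calc ∑ k ∈ Finset.univ.image (fun x : Fin n → X => occ x),
            (typeCard n X k : ℝ) *
              ((∏ a, P a ^ (k a)) *
                (2:ℝ)^(ρ * (-(∑ a, (k a:ℝ) * Real.logb 2 ((k a:ℝ)/(n:ℝ))))))
          ≤ ∑ k ∈ Finset.univ.image (fun x : Fin n → X => occ x), (2:ℝ)^((n:ℝ) * E) := by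
            refine Finset.sum_le_sum fun k hk => ?_
            obtain ⟨x, -, hx⟩ := Finset.mem_image.mp hk
            have hks : ∑ a, k a = n := by rw [← hx]; exact sum_occ x
            exact type_term_le P ρ hP hρ n hn1 k hks
        _ = ((Finset.univ.image (fun x : Fin n → X => occ x)).card : ℝ) * (2:ℝ)^((n:ℝ) * E) := by
            rw [Finset.sum_const, nsmul_eq_mul]
        _ ≤ ((n:ℝ)+1)^d * (2:ℝ)^((n:ℝ) * E) :=
            mul_le_mul_of_nonneg_right hcardbound (Real.rpow_pos_of_pos two_pos _).le
    have hmono := Real.logb_le_logb_of_le one_lt_two hTpos hTle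
    have hlogU : Real.logb 2 (((n:ℝ)+1)^d * (2:ℝ)^((n:ℝ) * E))
        = (d:ℝ) * Real.logb 2 ((n:ℝ)+1) + (n:ℝ) * E := by
      rw [Real.logb_mul (by positivity) (Real.rpow_pos_of_pos two_pos _).ne',
        Real.logb_pow, Real.logb_rpow two_pos (by norm_num)]
    calc (1/(n:ℝ)) * Real.logb 2
          (∑ x : Fin n → X, (∏ i, P (x i)) * (2 : ℝ) ^ ((n : ℝ) * ρ * empEnt x))
        ≤ (1/(n:ℝ)) * ((d:ℝ) * Real.logb 2 ((n:ℝ)+1) + (n:ℝ) * E) := by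
          rw [← hlogU]
          exact mul_le_mul_of_nonneg_left hmono (by positivity)
      _ = (d:ℝ) * Real.logb 2 ((n:ℝ)+1) / n + E := by field_simp

end MainSection

/-- Method-of-types computation of the guessing exponent:
`(1/n) log₂ ∑_{x ∈ X^n} P^n(x) 2^{nρĤ_x} → max_Q [ρ H(Q) − D(Q‖P)]`. -/
theorem guessing_exponent_limit (P : X → ℝ) (hP : ∀ a, 0 < P a)
    (hPsum : ∑ a : X, P a = 1) (ρ : ℝ) (hρ : 0 < ρ) :
    Filter.Tendsto
      (fun n : ℕ =>
        (1 / (n : ℝ)) * Real.logb 2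
          (∑ x : Fin n → X, (∏ i, P (x i)) * (2 : ℝ) ^ ((n : ℝ) * ρ * empEnt x)))
      Filter.atTop
      (nhds (sSup {e : ℝ | ∃ Q : X → ℝ, (∀ a, 0 ≤ Q a) ∧ (∑ a : X, Q a) = 1 ∧
        e = ρ * (-∑ a : X, Q a * Real.logb 2 (Q a)) -
              ∑ a : X, Q a * Real.logb 2 (Q a / P a)})) := by
  have hne : Nonempty X := by
    rcases isEmpty_or_nonempty X with h | h
    · exfalso
      rw [Finset.univ_eq_empty, Finset.sum_empty] at hPsum
      norm_num at hPsum
    · exact h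
  rw [sSup_eq_E P ρ hP hρ]
  exact main_limit P hP hPsum ρ hρ
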